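/- arXiv:2106.03014 — 2 statements merged into one kernel-verified Lean document; each statement's English description precedes it below -/
import Mathlib

section
/- For r₁, r₂, α₁, α₂ > 0, the Wasserstein distance between Gamma(r₁,α₁) and Gamma(r₂,α₂) is at most |r₁−r₂|/(α₁∨α₂) + (r₁∨r₂)|1/α₁ − 1/α₂|. -/
/-!
Pass through `Gamma(r₁, α₂)` when `α₁ ≤ α₂`. Changing the rate is a rescaling: if
`X ~ Gamma(r, α₁)` then `(α₁ / α₂) X ~ Gamma(r, α₂)`, and this coupling moves a 1-Lipschitz
test function by at most `|1 - α₁ / α₂| E|X| = r |1/α₁ - 1/α₂|`. Raising the shape from `r₁`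
to `r₂` raises the law in the stochastic order: the likelihood ratio is a multiple of
`x ^ (r₂ - r₁)`, which increases on the support, so Chebyshev's integral inequality gives
`E₁ u ≤ E₂ u` for every monotone `u`. Since `x + f x` and `x - f x` are monotone for
1-Lipschitz `f`, `|E₁ f - E₂ f|` is then at most the difference of the means, `(r₂ - r₁) / α`.
-/

open MeasureTheory ProbabilityTheory Real

noncomputable section

/-- `ν` is the size-biased distribution of `μ`: `E[V f(V)] = E[V] · E[f(V^s)]`
for all bounded measurable test functions `f`. -/
def IsSizeBiased (μ ν : Measure ℝ) : Prop :=
  ∀ f : ℝ → ℝ, Measurable f → (∀ x, |f x| ≤ 1) →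
    ∫ x, x * f x ∂μ = (∫ x, x ∂μ) * ∫ x, f x ∂ν

/-- `ν` is the zero-biased distribution of `μ`: `E[(W−μ) f(W)] = σ² · E[f'(W^z)]`
for all differentiable test functions `f` with bounded derivative. -/
def IsZeroBiased (μ ν : Measure ℝ) : Prop :=
  ∀ f : ℝ → ℝ, Differentiable ℝ f → (∀ x, |deriv f x| ≤ 1) →
    ∫ x, (x - ∫ y, y ∂μ) * f x ∂μ
      = (∫ x, (x - ∫ y, y ∂μ) ^ 2 ∂μ) * ∫ x, deriv f x ∂ν

open Set Filter
open scoped NNReal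

section MeasureSpace

variable {Ω : Type*} [MeasurableSpace Ω] {μ : Measure Ω}

theorem integral_mul_integral_le_integral_mul_of_monovaryOn [IsProbabilityMeasure μ]
    {u w : Ω → ℝ} {s : Set Ω} (hs : ∀ᵐ x ∂μ, x ∈ s) (hmono : MonovaryOn u w s)
    (hu : Integrable u μ) (hw : Integrable w μ) (huw : Integrable (fun x ↦ u x * w x) μ) :
    (∫ x, u x ∂μ) * ∫ x, w x ∂μ ≤ ∫ x, u x * w x ∂μ := by
  have hexpand : ∫ z, (u z.2 - u z.1) * (w z.2 - w z.1) ∂μ.prod μ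
      = 2 * ((∫ x, u x * w x ∂μ) - (∫ x, u x ∂μ) * ∫ x, w x ∂μ) := by
    have hpoint : ∀ z : Ω × Ω, (u z.2 - u z.1) * (w z.2 - w z.1)
        = (u z.1 * w z.1 + u z.2 * w z.2) - (u z.1 * w z.2 + w z.1 * u z.2) :=
      fun z ↦ by ring
    have hdiag₁ := huw.comp_fst μ
    have hdiag₂ := huw.comp_snd μ
    rw [integral_congr_ae (Eventually.of_forall hpoint),
      integral_sub (hdiag₁.fun_add hdiag₂) ((hu.mul_prod hw).fun_add (hw.mul_prod hu)),
      integral_add hdiag₁ hdiag₂, integral_add (hu.mul_prod hw) (hw.mul_prod hu),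
      integral_fun_fst (fun x ↦ u x * w x), integral_fun_snd (fun x ↦ u x * w x),
      integral_prod_mul u w, integral_prod_mul w u]
    simp only [probReal_univ, one_smul]
    ring
  have hnonneg : 0 ≤ ∫ z, (u z.2 - u z.1) * (w z.2 - w z.1) ∂μ.prod μ := by
    refine integral_nonneg_of_ae ?_
    filter_upwards [Measure.quasiMeasurePreserving_fst.ae hs,
      Measure.quasiMeasurePreserving_snd.ae hs] with z h₁ h₂
    exact hmono.sub_mul_sub_nonneg h₁ h₂
  linarith

variable {E F : Type*} [NormedAddCommGroup E] [NormedAddCommGroup F]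

theorem LipschitzWith.integrable_comp [IsFiniteMeasure μ] {K : ℝ≥0} {f : E → F} {X : Ω → E}
    (hf : LipschitzWith K f) (hX : Integrable X μ) : Integrable (fun x ↦ f (X x)) μ := by
  have hf₀ : LipschitzWith K (fun y ↦ f y - f 0) := by
    simpa using hf.sub (LipschitzWith.const (f 0))
  have h := (hf₀.comp_memLp (by simp) (memLp_one_iff_integrable.mpr hX)).integrable le_rfl
  simpa [Function.comp_def] using h.fun_add (integrable_const (f 0))

end MeasureSpace

section RealLine

variable {μ ν : Measure ℝ} {K : ℝ≥0} {f : ℝ → ℝ}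

theorem abs_integral_sub_integral_comp_mul_le [IsFiniteMeasure μ] (hμ : Integrable (fun x ↦ x) μ)
    (hf : LipschitzWith K f) (c : ℝ) :
    |∫ x, f x ∂μ - ∫ x, f (c * x) ∂μ| ≤ K * |1 - c| * ∫ x, |x| ∂μ := by
  have hf₁ : Integrable f μ := hf.integrable_comp hμ
  have hf₂ : Integrable (fun x ↦ f (c * x)) μ := hf.integrable_comp (hμ.const_mul c)
  rw [← integral_sub hf₁ hf₂, ← integral_const_mul]
  refine abs_integral_le_integral_abs.trans (integral_mono (hf₁.sub hf₂).abs
    ((hμ.abs).const_mul _) fun x ↦ ?_)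
  calc |f x - f (c * x)| ≤ K * |x - c * x| := by
        simpa [Real.dist_eq] using hf.dist_le_mul x (c * x)
    _ = K * |1 - c| * |x| := by rw [mul_assoc, ← abs_mul, sub_mul, one_mul]

theorem LipschitzWith.monotone_mul_add (hf : LipschitzWith K f) :
    Monotone fun x ↦ K * x + f x := by
  intro x y hxy
  have h := hf.dist_le_mul y x
  rw [Real.dist_eq, Real.dist_eq, abs_of_nonneg (sub_nonneg.mpr hxy), abs_le] at h
  linarith [h.1]

theorem LipschitzWith.monotone_mul_sub (hf : LipschitzWith K f) :
    Monotone fun x ↦ K * x - f x := by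
  simpa [sub_eq_add_neg] using hf.neg.monotone_mul_add

theorem abs_integral_sub_integral_le_of_monotone [IsFiniteMeasure μ] [IsFiniteMeasure ν]
    (hμ : Integrable (fun x ↦ x) μ) (hν : Integrable (fun x ↦ x) ν)
    (hle : ∀ u : ℝ → ℝ, Monotone u → Integrable u μ → Integrable u ν →
      ∫ x, u x ∂μ ≤ ∫ x, u x ∂ν)
    (hf : LipschitzWith K f) :
    |∫ x, f x ∂μ - ∫ x, f x ∂ν| ≤ K * (∫ x, x ∂ν - ∫ x, x ∂μ) := by
  have hfμ : Integrable f μ := hf.integrable_comp hμ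
  have hfν : Integrable f ν := hf.integrable_comp hν
  have hadd := hle _ hf.monotone_mul_add ((hμ.const_mul K).add hfμ) ((hν.const_mul K).add hfν)
  have hsub := hle _ hf.monotone_mul_sub ((hμ.const_mul K).sub hfμ) ((hν.const_mul K).sub hfν)
  rw [integral_add (hμ.const_mul K) hfμ, integral_add (hν.const_mul K) hfν,
    integral_const_mul, integral_const_mul] at hadd
  rw [integral_sub (hμ.const_mul K) hfμ, integral_sub (hν.const_mul K) hfν,
    integral_const_mul, integral_const_mul] at hsub
  rw [abs_le]
  constructor <;> linarith

end RealLine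

section Gamma

variable {a r c α α₁ α₂ r₁ r₂ : ℝ} {K : ℝ≥0} {f : ℝ → ℝ}

theorem measurable_gammaPDF (a r : ℝ) : Measurable (gammaPDF a r) :=
  (measurable_gammaPDFReal a r).ennreal_ofReal

theorem integral_gammaMeasure (ha : 0 < a) (hr : 0 < r) (g : ℝ → ℝ) :
    ∫ x, g x ∂gammaMeasure a r = ∫ x, gammaPDFReal a r x * g x := by
  rw [gammaMeasure, integral_withDensity_eq_integral_toReal_smul (measurable_gammaPDF a r)
    (Eventually.of_forall fun _ ↦ ENNReal.ofReal_lt_top)]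
  congr with x
  rw [gammaPDF, ENNReal.toReal_ofReal (gammaPDFReal_nonneg ha hr x), smul_eq_mul]

theorem integrable_gammaMeasure_iff (ha : 0 < a) (hr : 0 < r) {g : ℝ → ℝ} :
    Integrable g (gammaMeasure a r) ↔ Integrable (fun x ↦ gammaPDFReal a r x * g x) := by
  rw [gammaMeasure, integrable_withDensity_iff_integrable_smul' (measurable_gammaPDF a r)
    (Eventually.of_forall fun _ ↦ ENNReal.ofReal_lt_top)]
  simp only [gammaPDF, ENNReal.toReal_ofReal (gammaPDFReal_nonneg ha hr _), smul_eq_mul]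

theorem ae_nonneg_gammaMeasure : ∀ᵐ x ∂gammaMeasure a r, 0 ≤ x := by
  rw [gammaMeasure, ae_withDensity_iff (measurable_gammaPDF a r)]
  exact Eventually.of_forall fun x hx ↦ not_lt.mp fun hneg ↦ hx (gammaPDF_of_neg hneg)

theorem integrable_gammaPDFReal (ha : 0 < a) (hr : 0 < r) : Integrable (gammaPDFReal a r) := by
  have := isProbabilityMeasure_gammaMeasure ha hr
  simpa using (integrable_gammaMeasure_iff ha hr).mp (integrable_const (1 : ℝ))

theorem integral_gammaPDFReal (ha : 0 < a) (hr : 0 < r) : ∫ x, gammaPDFReal a r x = 1 := by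
  have := isProbabilityMeasure_gammaMeasure ha hr
  simpa using (integral_gammaMeasure ha hr fun _ ↦ (1 : ℝ)).symm

theorem gammaPDFReal_mul_eq_gammaPDFReal_add_one (ha : 0 < a) (hr : 0 < r) (x : ℝ) :
    gammaPDFReal a r x * x = a / r * gammaPDFReal (a + 1) r x := by
  unfold gammaPDFReal
  split_ifs with hx
  · rw [add_sub_cancel_right, rpow_add_one hr.ne', Gamma_add_one ha.ne',
      ← sub_add_cancel a 1, rpow_add_one' hx (by simpa using ha.ne'), sub_add_cancel]
    field_simp
  · simp

theorem integrable_id_gammaMeasure (ha : 0 < a) (hr : 0 < r) :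
    Integrable (fun x ↦ x) (gammaMeasure a r) := by
  rw [integrable_gammaMeasure_iff ha hr]
  simp_rw [gammaPDFReal_mul_eq_gammaPDFReal_add_one ha hr]
  exact (integrable_gammaPDFReal (by linarith) hr).const_mul _

theorem integral_id_gammaMeasure (ha : 0 < a) (hr : 0 < r) :
    ∫ x, x ∂gammaMeasure a r = a / r := by
  rw [integral_gammaMeasure ha hr]
  simp_rw [gammaPDFReal_mul_eq_gammaPDFReal_add_one ha hr]
  rw [integral_const_mul, integral_gammaPDFReal (by linarith) hr, mul_one]

theorem gammaPDFReal_mul_rate (hc : 0 < c) (hr : 0 ≤ r) (x : ℝ) :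
    gammaPDFReal a (c * r) x = c * gammaPDFReal a r (c * x) := by
  unfold gammaPDFReal
  rcases le_or_gt 0 x with hx | hx
  · rw [if_pos hx, if_pos (by positivity), mul_rpow hc.le hx, mul_rpow hc.le hr,
      rpow_sub_one hc.ne']
    field_simp
  · rw [if_neg (not_le.mpr hx), if_neg (not_le.mpr (mul_neg_of_pos_of_neg hc hx)), mul_zero]

theorem integral_comp_mul_left_gammaMeasure (ha : 0 < a) (hr : 0 < r) (hc : 0 < c)
    (g : ℝ → ℝ) : ∫ x, g (c * x) ∂gammaMeasure a (c * r) = ∫ x, g x ∂gammaMeasure a r := by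
  rw [integral_gammaMeasure ha (mul_pos hc hr), integral_gammaMeasure ha hr]
  simp_rw [gammaPDFReal_mul_rate hc hr.le, mul_assoc]
  rw [integral_const_mul, Measure.integral_comp_mul_left (fun y ↦ gammaPDFReal a r y * g y) c,
    abs_of_pos (inv_pos.mpr hc), smul_eq_mul, mul_inv_cancel_left₀ hc.ne']

theorem abs_integral_gammaMeasure_sub_le_of_same_shape (ha : 0 < a) (h₁ : 0 < α₁) (h₂ : 0 < α₂)
    (hf : LipschitzWith K f) :
    |∫ x, f x ∂gammaMeasure a α₁ - ∫ x, f x ∂gammaMeasure a α₂|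
      ≤ K * (a * |1 / α₁ - 1 / α₂|) := by
  have := isProbabilityMeasure_gammaMeasure ha h₁
  have hscale : ∫ x, f (α₁ / α₂ * x) ∂gammaMeasure a α₁ = ∫ x, f x ∂gammaMeasure a α₂ := by
    simpa [div_mul_cancel₀ α₁ h₂.ne'] using
      integral_comp_mul_left_gammaMeasure ha h₂ (div_pos h₁ h₂) f
  have habs : ∫ x, |x| ∂gammaMeasure a α₁ = a / α₁ := by
    rw [← integral_id_gammaMeasure ha h₁]
    exact integral_congr_ae (ae_nonneg_gammaMeasure.mono fun x hx ↦ abs_of_nonneg hx)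
  calc _ ≤ K * |1 - α₁ / α₂| * (a / α₁) := by
        simpa only [hscale, habs] using
          abs_integral_sub_integral_comp_mul_le (integrable_id_gammaMeasure ha h₁) hf (α₁ / α₂)
    _ = K * (a * |1 / α₁ - 1 / α₂|) := by
        rw [show 1 / α₁ - 1 / α₂ = (1 - α₁ / α₂) / α₁ by field_simp, abs_div, abs_of_pos h₁]
        ring

def gammaLikelihoodRatio (r₁ r₂ α x : ℝ) : ℝ :=
  Gamma r₁ / Gamma r₂ * (α * x) ^ (r₂ - r₁)

-- `x ≠ 0` is needed: at `0` the convention `0 ^ 0 = 1` breaks the identity (e.g. `r₁ < r₂ = 1`).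
theorem gammaPDFReal_eq_mul_gammaLikelihoodRatio (hα : 0 < α) (hr₁ : 0 < r₁) {x : ℝ}
    (hx : x ≠ 0) :
    gammaPDFReal r₂ α x = gammaPDFReal r₁ α x * gammaLikelihoodRatio r₁ r₂ α x := by
  unfold gammaPDFReal gammaLikelihoodRatio
  rcases hx.lt_or_gt with hneg | hpos
  · simp [not_le.mpr hneg]
  have hα' : α ^ r₂ = α ^ r₁ * α ^ (r₂ - r₁) := by rw [← rpow_add hα, add_sub_cancel]
  have hx' : x ^ (r₂ - 1) = x ^ (r₁ - 1) * x ^ (r₂ - r₁) := by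
    rw [← rpow_add hpos]; ring_nf
  rw [if_pos hpos.le, if_pos hpos.le, mul_rpow hα.le hpos.le, hα', hx']
  field_simp [(Gamma_pos_of_pos hr₁).ne']

theorem integral_gammaMeasure_eq_integral_mul_gammaLikelihoodRatio (hα : 0 < α)
    (hr₁ : 0 < r₁) (hr₂ : 0 < r₂) (g : ℝ → ℝ) :
    ∫ x, g x ∂gammaMeasure r₂ α
      = ∫ x, g x * gammaLikelihoodRatio r₁ r₂ α x ∂gammaMeasure r₁ α := by
  rw [integral_gammaMeasure hr₂ hα, integral_gammaMeasure hr₁ hα]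
  refine integral_congr_ae ((volume.ae_ne 0).mono fun x hx ↦ ?_)
  dsimp only
  rw [gammaPDFReal_eq_mul_gammaLikelihoodRatio hα hr₁ hx]
  ring

theorem integrable_gammaMeasure_iff_integrable_mul_gammaLikelihoodRatio (hα : 0 < α)
    (hr₁ : 0 < r₁) (hr₂ : 0 < r₂) {g : ℝ → ℝ} :
    Integrable g (gammaMeasure r₂ α)
      ↔ Integrable (fun x ↦ g x * gammaLikelihoodRatio r₁ r₂ α x) (gammaMeasure r₁ α) := by
  rw [integrable_gammaMeasure_iff hr₂ hα, integrable_gammaMeasure_iff hr₁ hα]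
  refine integrable_congr ((volume.ae_ne 0).mono fun x hx ↦ ?_)
  dsimp only
  rw [gammaPDFReal_eq_mul_gammaLikelihoodRatio hα hr₁ hx]
  ring

theorem monotoneOn_gammaLikelihoodRatio (hα : 0 ≤ α) (hr₁ : 0 < r₁) (hr : r₁ ≤ r₂) :
    MonotoneOn (gammaLikelihoodRatio r₁ r₂ α) (Ici 0) := fun _ hx _ _ hxy ↦
  mul_le_mul_of_nonneg_left
    (rpow_le_rpow (mul_nonneg hα hx) (mul_le_mul_of_nonneg_left hxy hα) (sub_nonneg.mpr hr))
    (div_nonneg (Gamma_pos_of_pos hr₁).le (Gamma_pos_of_pos (hr₁.trans_le hr)).le)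

theorem integral_gammaMeasure_le_of_monotone (hα : 0 < α) (hr₁ : 0 < r₁) (hr : r₁ ≤ r₂)
    {u : ℝ → ℝ} (hu : Monotone u) (hu₁ : Integrable u (gammaMeasure r₁ α))
    (hu₂ : Integrable u (gammaMeasure r₂ α)) :
    ∫ x, u x ∂gammaMeasure r₁ α ≤ ∫ x, u x ∂gammaMeasure r₂ α := by
  have hr₂ := hr₁.trans_le hr
  have := isProbabilityMeasure_gammaMeasure hr₁ hα
  have := isProbabilityMeasure_gammaMeasure hr₂ hα
  have hL : Integrable (gammaLikelihoodRatio r₁ r₂ α) (gammaMeasure r₁ α) := by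
    simpa using (integrable_gammaMeasure_iff_integrable_mul_gammaLikelihoodRatio hα hr₁ hr₂).mp
      (integrable_const (1 : ℝ))
  have hL₁ : ∫ x, gammaLikelihoodRatio r₁ r₂ α x ∂gammaMeasure r₁ α = 1 := by
    simpa using (integral_gammaMeasure_eq_integral_mul_gammaLikelihoodRatio hα hr₁ hr₂
      fun _ ↦ (1 : ℝ)).symm
  calc ∫ x, u x ∂gammaMeasure r₁ α
      = (∫ x, u x ∂gammaMeasure r₁ α)
          * ∫ x, gammaLikelihoodRatio r₁ r₂ α x ∂gammaMeasure r₁ α := by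
        rw [hL₁, mul_one]
    _ ≤ ∫ x, u x * gammaLikelihoodRatio r₁ r₂ α x ∂gammaMeasure r₁ α :=
        integral_mul_integral_le_integral_mul_of_monovaryOn ae_nonneg_gammaMeasure
          ((hu.monotoneOn _).monovaryOn (monotoneOn_gammaLikelihoodRatio hα.le hr₁ hr)) hu₁ hL
          ((integrable_gammaMeasure_iff_integrable_mul_gammaLikelihoodRatio hα hr₁ hr₂).mp hu₂)
    _ = ∫ x, u x ∂gammaMeasure r₂ α :=
        (integral_gammaMeasure_eq_integral_mul_gammaLikelihoodRatio hα hr₁ hr₂ u).symm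

theorem abs_integral_gammaMeasure_sub_le_of_same_rate (hα : 0 < α) (h₁ : 0 < r₁) (h₂ : 0 < r₂)
    (hf : LipschitzWith K f) :
    |∫ x, f x ∂gammaMeasure r₁ α - ∫ x, f x ∂gammaMeasure r₂ α| ≤ K * (|r₁ - r₂| / α) := by
  wlog hr : r₁ ≤ r₂ generalizing r₁ r₂
  · rw [abs_sub_comm, abs_sub_comm r₁]
    exact this h₂ h₁ (le_of_not_ge hr)
  have := isProbabilityMeasure_gammaMeasure h₁ hα
  have := isProbabilityMeasure_gammaMeasure h₂ hα
  have h := abs_integral_sub_integral_le_of_monotone (integrable_id_gammaMeasure h₁ hα)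
    (integrable_id_gammaMeasure h₂ hα)
    (fun _ hu ↦ integral_gammaMeasure_le_of_monotone hα h₁ hr hu) hf
  rwa [integral_id_gammaMeasure h₁ hα, integral_id_gammaMeasure h₂ hα, ← sub_div,
    ← abs_of_nonneg (sub_nonneg.mpr hr), abs_sub_comm r₂] at h

end Gamma

/-- Wasserstein distance bound between two gamma distributions. -/
theorem wasserstein_gamma_gamma_le (r₁ r₂ α₁ α₂ : ℝ)
    (hr₁ : 0 < r₁) (hr₂ : 0 < r₂) (hα₁ : 0 < α₁) (hα₂ : 0 < α₂) :
    ∀ f : ℝ → ℝ, LipschitzWith 1 f →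
      |(∫ x, f x ∂gammaMeasure r₁ α₁) - ∫ x, f x ∂gammaMeasure r₂ α₂|
        ≤ |r₁ - r₂| / max α₁ α₂ + max r₁ r₂ * |1 / α₁ - 1 / α₂| := by
  intro f hf
  wlog hα : α₁ ≤ α₂ generalizing r₁ r₂ α₁ α₂
  · rw [abs_sub_comm, abs_sub_comm r₁, abs_sub_comm (1 / α₁), max_comm, max_comm r₁]
    exact this r₂ r₁ α₂ α₁ hr₂ hr₁ hα₂ hα₁ (le_of_not_ge hα)
  have hrate := abs_integral_gammaMeasure_sub_le_of_same_shape hr₁ hα₁ hα₂ hf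
  have hshape := abs_integral_gammaMeasure_sub_le_of_same_rate hα₂ hr₁ hr₂ hf
  rw [NNReal.coe_one, one_mul] at hrate hshape
  rw [max_eq_right hα]
  calc _ ≤ |∫ x, f x ∂gammaMeasure r₁ α₁ - ∫ x, f x ∂gammaMeasure r₁ α₂|
        + |∫ x, f x ∂gammaMeasure r₁ α₂ - ∫ x, f x ∂gammaMeasure r₂ α₂| := abs_sub_le _ _ _
    _ ≤ |r₁ - r₂| / α₂ + max r₁ r₂ * |1 / α₁ - 1 / α₂| := by
        have := mul_le_mul_of_nonneg_right (le_max_left r₁ r₂) (abs_nonneg (1 / α₁ - 1 / α₂))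
        linarith
end
end

section
/- Let X be a nonnegative random variable with 0 < E[X²] < ∞ and X' a nonnegative independent random variable with size-bias relation as given. Then for all θ > 0, the Laplace transform identity E[e^{−θX^z}] = E[e^{−θX}] · ∫_0^∞ e^{−θx} P(X' ≥ x)/E[X'] dx holds, where X^z has the zero-biased distribution of X. -/
open MeasureTheory ProbabilityTheory Real

noncomputable section

/-! Testing the zero-bias identity against the primitive of `t ↦ e^{-θt}` gives
`σ² E[e^{-θX^z}] = (E[X] E[e^{-θX}] - E[X e^{-θX}]) / θ`, and the size-bias identity with
`X^s = X + X'` turns `E[X e^{-θX}]` into `E[X] E[e^{-θX}] E[e^{-θX'}]`. The same identity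
applied to (truncations of) `f(x) = x` gives `σ² = E[X] E[X']`, and the layer-cake formula
identifies `∫_0^∞ e^{-θx} P(X' ≥ x) dx` with `(1 - E[e^{-θX'}]) / θ`.

The test functions must be bounded, so `e^{-θx}` enters as `e^{-θ max(x, 0)}`; this is why
`X^z ≥ 0` has to be derived from the zero-bias identity first. -/

lemma ae_nonneg_of_measure_Iio_eq_zero {μ : Measure ℝ} (h : μ (Set.Iio 0) = 0) :
    ∀ᵐ x ∂μ, 0 ≤ x := by
  simp only [ae_iff, not_le]
  exact h

lemma intervalIntegral.integral_exp_neg_mul {θ : ℝ} (hθ : θ ≠ 0) (x : ℝ) :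
    ∫ t in (0 : ℝ)..x, rexp (-(θ * t)) = (1 - rexp (-(θ * x))) / θ := by
  simp_rw [← neg_mul]
  rw [intervalIntegral.integral_comp_mul_left rexp (neg_ne_zero.2 hθ), integral_exp]
  simp only [mul_zero, Real.exp_zero, smul_eq_mul, inv_neg]
  field_simp
  ring

lemma abs_exp_neg_mul_max_le_one {θ : ℝ} (hθ : 0 ≤ θ) (x : ℝ) :
    |rexp (-(θ * max x 0))| ≤ 1 := by
  rw [abs_of_pos (Real.exp_pos _), Real.exp_le_one_iff, neg_nonpos]
  exact mul_nonneg hθ (le_max_right _ _)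

lemma integrable_exp_neg_mul {μ : Measure ℝ} [IsFiniteMeasure μ] (hμ : ∀ᵐ x ∂μ, 0 ≤ x)
    {θ : ℝ} (hθ : 0 ≤ θ) : Integrable (fun x ↦ rexp (-(θ * x))) μ := by
  refine (integrable_const 1).mono' (by fun_prop) ?_
  filter_upwards [hμ] with x hx
  simpa [max_eq_left hx] using abs_exp_neg_mul_max_le_one hθ x

lemma MeasureTheory.Integrable.mul_exp_neg_mul {μ : Measure ℝ} {f : ℝ → ℝ}
    (hf : Integrable f μ) (hμ : ∀ᵐ x ∂μ, 0 ≤ x) {θ : ℝ} (hθ : 0 ≤ θ) :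
    Integrable (fun x ↦ f x * rexp (-(θ * x))) μ := by
  refine hf.mul_bdd (c := 1) (by fun_prop) ?_
  filter_upwards [hμ] with x hx
  simpa [max_eq_left hx] using abs_exp_neg_mul_max_le_one hθ x

section Convolution

variable {μ ν : Measure ℝ}

lemma integrable_id_conv [IsFiniteMeasure μ] [IsFiniteMeasure ν] (hμ : Integrable id μ)
    (hν : Integrable id ν) : Integrable id (μ ∗ ν) := by
  rw [Measure.conv, integrable_map_measure aestronglyMeasurable_id (by fun_prop)]
  exact (hμ.comp_fst ν).add (hν.comp_snd μ)

lemma integral_id_conv [IsProbabilityMeasure μ] [IsProbabilityMeasure ν] (hμ : Integrable id μ)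
    (hν : Integrable id ν) : ∫ x, x ∂(μ ∗ ν) = ∫ x, x ∂μ + ∫ x, x ∂ν := by
  rw [Measure.conv, integral_map (by fun_prop) (by fun_prop)]
  exact (integral_add (hμ.comp_fst ν) (hν.comp_snd μ)).trans
    (congrArg₂ (· + ·) (by simpa using integral_fun_fst (ν := ν) (id : ℝ → ℝ))
      (by simpa using integral_fun_snd (μ := μ) (id : ℝ → ℝ)))

lemma integral_exp_neg_mul_max_conv [SFinite μ] [SFinite ν] (hμ : ∀ᵐ x ∂μ, 0 ≤ x)
    (hν : ∀ᵐ x ∂ν, 0 ≤ x) (θ : ℝ) :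
    ∫ x, rexp (-(θ * max x 0)) ∂(μ ∗ ν)
      = (∫ x, rexp (-(θ * x)) ∂μ) * ∫ x, rexp (-(θ * x)) ∂ν := by
  rw [Measure.conv, integral_map (by fun_prop) (by fun_prop), ← integral_prod_mul]
  refine integral_congr_ae ?_
  filter_upwards [Measure.quasiMeasurePreserving_fst.ae hμ,
    Measure.quasiMeasurePreserving_snd.ae hν] with p hp₁ hp₂
  rw [max_eq_left (add_nonneg hp₁ hp₂), ← Real.exp_add]
  ring_nf

end Convolution

namespace IsSizeBiased

variable {μ ρ : Measure ℝ}

lemma integral_mul_of_abs_le (h : IsSizeBiased μ ρ) {f : ℝ → ℝ} (hf : Measurable f)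
    {C : ℝ} (hC : ∀ x, |f x| ≤ C) : ∫ x, x * f x ∂μ = (∫ x, x ∂μ) * ∫ x, f x ∂ρ := by
  have hC₁ : 0 < C + 1 := by linarith [(abs_nonneg _).trans (hC 0)]
  have hf₁ : ∀ x, |f x / (C + 1)| ≤ 1 := fun x ↦ by
    rw [abs_div, abs_of_pos hC₁, div_le_one hC₁]
    linarith [hC x]
  have := h _ (hf.div_const _) hf₁
  simp_rw [← mul_div_assoc, integral_div] at this
  field_simp at this
  exact this

lemma integral_sq (h : IsSizeBiased μ ρ) (hμ : MemLp id 2 μ) (hρ : Integrable id ρ) :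
    ∫ x, x ^ 2 ∂μ = (∫ x, x ∂μ) * ∫ x, x ∂ρ := by
  have hmeas : ∀ A, Measurable (truncation (id : ℝ → ℝ) A) :=
    fun A ↦ measurable_id.indicator measurableSet_Ioc
  have htrunc : ∀ A,
      ∫ x, x * truncation id A x ∂μ = (∫ x, x ∂μ) * ∫ x, truncation id A x ∂ρ :=
    fun A ↦ h.integral_mul_of_abs_le (hmeas A) (abs_truncation_le_bound id A)
  have hlim : Filter.Tendsto (fun A ↦ ∫ x, x * truncation id A x ∂μ) Filter.atTop
      (nhds (∫ x, x ^ 2 ∂μ)) := by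
    refine tendsto_integral_filter_of_dominated_convergence (fun x ↦ x ^ 2)
      (.of_forall fun A ↦ (measurable_id.mul (hmeas A)).aestronglyMeasurable)
      (.of_forall fun A ↦ .of_forall fun x ↦ ?_) hμ.integrable_sq (.of_forall fun x ↦ ?_)
    · rw [norm_mul, Real.norm_eq_abs, Real.norm_eq_abs, sq, ← abs_mul_abs_self x]
      exact mul_le_mul_of_nonneg_left (abs_truncation_le_abs_self id A x) (abs_nonneg x)
    · refine tendsto_const_nhds.congr' ?_
      filter_upwards [Filter.eventually_gt_atTop |x|] with A hA
      rw [truncation_eq_self hA, id, sq]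
  exact tendsto_nhds_unique hlim <| by
    simpa only [htrunc, id] using (tendsto_integral_truncation hρ).const_mul (∫ x, x ∂μ)

lemma integral_mul_exp_neg_mul_of_conv {μ' : Measure ℝ} [SFinite μ] [SFinite μ']
    (h : IsSizeBiased μ (μ ∗ μ')) (hμ : ∀ᵐ x ∂μ, 0 ≤ x) (hμ' : ∀ᵐ x ∂μ', 0 ≤ x)
    {θ : ℝ} (hθ : 0 ≤ θ) :
    ∫ x, x * rexp (-(θ * x)) ∂μ
      = (∫ x, x ∂μ) * ((∫ x, rexp (-(θ * x)) ∂μ) * ∫ x, rexp (-(θ * x)) ∂μ') := by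
  rw [← integral_exp_neg_mul_max_conv hμ hμ' θ,
    ← h _ (by fun_prop) (abs_exp_neg_mul_max_le_one hθ)]
  refine integral_congr_ae ?_
  filter_upwards [hμ] with x hx
  rw [max_eq_left hx]

end IsSizeBiased

lemma integral_sub_integral_sq {μ : Measure ℝ} [IsProbabilityMeasure μ] (hμ : MemLp id 2 μ) :
    ∫ x, (x - ∫ y, y ∂μ) ^ 2 ∂μ = ∫ x, x ^ 2 ∂μ - (∫ x, x ∂μ) ^ 2 := by
  simpa using (variance_eq_integral measurable_id.aemeasurable).symm.trans (variance_eq_sub hμ)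

namespace IsZeroBiased

variable {μ ν : Measure ℝ}

lemma integral_mul_intervalIntegral (h : IsZeroBiased μ ν) {g : ℝ → ℝ} (hg : Continuous g)
    (hg₁ : ∀ x, |g x| ≤ 1) :
    ∫ x, (x - ∫ y, y ∂μ) * (∫ t in (0 : ℝ)..x, g t) ∂μ
      = (∫ x, (x - ∫ y, y ∂μ) ^ 2 ∂μ) * ∫ x, g x ∂ν := by
  have hderiv : deriv (fun x ↦ ∫ t in (0 : ℝ)..x, g t) = g :=
    funext (Continuous.deriv_integral g hg 0)
  simpa only [hderiv] using h _
    (fun x ↦ (hg.integral_hasStrictDerivAt 0 x).hasDerivAt.differentiableAt) (by rwa [hderiv])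

lemma ae_nonneg [IsFiniteMeasure ν] (h : IsZeroBiased μ ν) (hμ : ∀ᵐ x ∂μ, 0 ≤ x)
    (hvar : 0 < ∫ x, (x - ∫ y, y ∂μ) ^ 2 ∂μ) : ∀ᵐ x ∂ν, 0 ≤ x := by
  -- `g` is positive exactly on `(-∞, 0)`, so its primitive vanishes on the support of `μ`.
  set g : ℝ → ℝ := fun x ↦ min 1 (max 0 (-x)) with hg_def
  have hg₀ : 0 ≤ g := fun x ↦ le_min zero_le_one (le_max_left _ _)
  have hg₁ : ∀ x, |g x| ≤ 1 := fun x ↦ by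
    rw [abs_of_nonneg (hg₀ x)]
    exact min_le_left _ _
  have hprim : ∀ᵐ x ∂μ, (x - ∫ y, y ∂μ) * (∫ t in (0 : ℝ)..x, g t) = 0 := by
    filter_upwards [hμ] with x hx
    rw [intervalIntegral.integral_congr (g := fun _ ↦ 0), intervalIntegral.integral_zero,
      mul_zero]
    intro t ht
    rw [Set.uIcc_of_le hx] at ht
    simp [hg_def, ht.1]
  have hνg : ∫ x, g x ∂ν = 0 := by
    have := h.integral_mul_intervalIntegral (by fun_prop) hg₁
    rw [integral_congr_ae hprim, integral_zero] at this
    exact (mul_eq_zero.1 this.symm).resolve_left hvar.ne'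
  have hgν : Integrable g ν := (integrable_const 1).mono' (by fun_prop) (.of_forall hg₁)
  filter_upwards [(integral_eq_zero_iff_of_nonneg hg₀ hgν).1 hνg] with x hx
  by_contra hneg
  have : 0 < g x := lt_min one_pos (lt_max_of_lt_right (by linarith))
  exact this.ne' hx

lemma integral_exp_neg_mul [IsProbabilityMeasure μ] [IsFiniteMeasure ν] (h : IsZeroBiased μ ν)
    (hμ : ∀ᵐ x ∂μ, 0 ≤ x) (hint : Integrable id μ)
    (hvar : 0 < ∫ x, (x - ∫ y, y ∂μ) ^ 2 ∂μ) {θ : ℝ} (hθ : 0 < θ) :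
    (∫ x, (x - ∫ y, y ∂μ) ^ 2 ∂μ) * ∫ x, rexp (-(θ * x)) ∂ν
      = ((∫ x, x ∂μ) * (∫ x, rexp (-(θ * x)) ∂μ) - ∫ x, x * rexp (-(θ * x)) ∂μ)
          / θ := by
  set m := ∫ y, y ∂μ
  have hν : ∫ x, rexp (-(θ * max x 0)) ∂ν = ∫ x, rexp (-(θ * x)) ∂ν := by
    refine integral_congr_ae ?_
    filter_upwards [h.ae_nonneg hμ hvar] with x hx
    rw [max_eq_left hx]
  have hprim : ∀ᵐ x ∂μ, (x - m) * (∫ t in (0 : ℝ)..x, rexp (-(θ * max t 0)))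
      = ((x - m) - (x * rexp (-(θ * x)) - m * rexp (-(θ * x)))) / θ := by
    filter_upwards [hμ] with x hx
    rw [intervalIntegral.integral_congr (g := fun t ↦ rexp (-(θ * t))),
      intervalIntegral.integral_exp_neg_mul hθ.ne']
    · ring
    intro t ht
    rw [Set.uIcc_of_le hx] at ht
    simp only [max_eq_left ht.1]
  have hx : Integrable (fun x ↦ x) μ := hint
  have hexp := integrable_exp_neg_mul hμ hθ.le
  have hxexp := hx.mul_exp_neg_mul hμ hθ.le
  have hsub : Integrable (fun x ↦ x * rexp (-(θ * x)) - m * rexp (-(θ * x))) μ :=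
    hxexp.sub (hexp.const_mul m)
  have hxm : Integrable (fun x ↦ x - m) μ := hx.sub (integrable_const m)
  rw [← hν,
    ← h.integral_mul_intervalIntegral (by fun_prop) (abs_exp_neg_mul_max_le_one hθ.le),
    integral_congr_ae hprim, integral_div, integral_sub hxm hsub,
    integral_sub hx (integrable_const m), integral_sub hxexp (hexp.const_mul m),
    integral_const_mul]
  simp [m]

end IsZeroBiased

lemma integral_exp_neg_mul_mul_measure_Ici {μ : Measure ℝ} [IsProbabilityMeasure μ]
    (hμ : ∀ᵐ x ∂μ, 0 ≤ x) {θ : ℝ} (hθ : 0 < θ) :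
    ∫ x in Set.Ioi (0 : ℝ), rexp (-(θ * x)) * (μ (Set.Ici x)).toReal
      = (1 - ∫ x, rexp (-(θ * x)) ∂μ) / θ := by
  have hexp : Continuous fun t : ℝ ↦ rexp (-(θ * t)) := by fun_prop
  have hmeas : Measurable fun x ↦ rexp (-(θ * x)) * (μ (Set.Ici x)).toReal :=
    hexp.measurable.mul
      (Antitone.measurable fun _ _ hxy ↦ measure_mono (Set.Ici_subset_Ici.2 hxy)).ennreal_toReal
  have hint : ∀ a b, IntervalIntegrable (fun t ↦ rexp (-(θ * t))) volume a b :=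
    fun _ _ ↦ hexp.intervalIntegrable _ _
  have hprim : ∀ᵐ x ∂μ, 0 ≤ ∫ t in (0 : ℝ)..x, rexp (-(θ * t)) := by
    filter_upwards [hμ] with x hx
    exact intervalIntegral.integral_nonneg hx fun t _ ↦ (Real.exp_pos _).le
  calc ∫ x in Set.Ioi (0 : ℝ), rexp (-(θ * x)) * (μ (Set.Ici x)).toReal
      = (∫⁻ x in Set.Ioi 0, μ {a | x ≤ a} * ENNReal.ofReal (rexp (-(θ * x)))).toReal := by
        rw [integral_eq_lintegral_of_nonneg_ae (.of_forall fun x ↦ by positivity)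
          hmeas.aestronglyMeasurable]
        congr 1
        refine setLIntegral_congr_fun measurableSet_Ioi fun x _ ↦ ?_
        rw [ENNReal.ofReal_mul (Real.exp_pos _).le, ENNReal.ofReal_toReal (measure_ne_top _ _),
          mul_comm]
        rfl
    _ = (∫⁻ x, ENNReal.ofReal (∫ t in (0 : ℝ)..x, rexp (-(θ * t))) ∂μ).toReal := by
        rw [lintegral_comp_eq_lintegral_meas_le_mul μ hμ aemeasurable_id
          (fun _ _ ↦ hint _ _) (.of_forall fun _ ↦ (Real.exp_pos _).le)]
    _ = ∫ x, (∫ t in (0 : ℝ)..x, rexp (-(θ * t))) ∂μ :=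
        (integral_eq_lintegral_of_nonneg_ae hprim
          (intervalIntegral.continuous_primitive hint 0).aestronglyMeasurable).symm
    _ = (1 - ∫ x, rexp (-(θ * x)) ∂μ) / θ := by
        simp_rw [intervalIntegral.integral_exp_neg_mul hθ.ne']
        rw [integral_div, integral_sub (integrable_const 1) (integrable_exp_neg_mul hμ hθ.le)]
        simp

/-- Laplace transform identity: if `X^s =_d X + X'` with `X'` independent of `X`, then
`E[e^{−θ X^z}] = E[e^{−θX}] ∫_0^∞ e^{−θx} P(X' ≥ x)/E[X'] dx` for all `θ > 0`. -/
theorem laplace_zeroBiased (μ μ' ν : Measure ℝ)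
    [IsProbabilityMeasure μ] [IsProbabilityMeasure μ'] [IsProbabilityMeasure ν]
    (hμ0 : μ (Set.Iio 0) = 0) (hμ'0 : μ' (Set.Iio 0) = 0)
    (hL2 : MemLp id 2 μ) (hvar : 0 < ∫ x, (x - ∫ y, y ∂μ) ^ 2 ∂μ)
    (hμ'int : Integrable id μ') (hμ'mean : 0 < ∫ x, x ∂μ')
    (hsb : IsSizeBiased μ (Measure.conv μ μ')) (hzb : IsZeroBiased μ ν) :
    ∀ θ : ℝ, 0 < θ →
      ∫ x, Real.exp (-(θ * x)) ∂ν
        = (∫ x, Real.exp (-(θ * x)) ∂μ)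
            * ∫ x in Set.Ioi (0 : ℝ),
                Real.exp (-(θ * x)) * ((μ' (Set.Ici x)).toReal / ∫ y, y ∂μ') := by
  intro θ hθ
  have hμ := ae_nonneg_of_measure_Iio_eq_zero hμ0
  have hμ' := ae_nonneg_of_measure_Iio_eq_zero hμ'0
  have hμint : Integrable id μ := hL2.integrable one_le_two
  have hvar_eq : ∫ x, (x - ∫ y, y ∂μ) ^ 2 ∂μ = (∫ x, x ∂μ) * ∫ x, x ∂μ' := by
    rw [integral_sub_integral_sq hL2, hsb.integral_sq hL2 (integrable_id_conv hμint hμ'int),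
      integral_id_conv hμint hμ'int]
    ring
  have hm : ∫ x, x ∂μ ≠ 0 := left_ne_zero_of_mul (hvar_eq ▸ hvar).ne'
  have hZ := hzb.integral_exp_neg_mul hμ hμint hvar hθ
  rw [hsb.integral_mul_exp_neg_mul_of_conv hμ hμ' hθ.le, hvar_eq] at hZ
  simp_rw [mul_div_assoc']
  rw [integral_div, integral_exp_neg_mul_mul_measure_Ici hμ' hθ]
  apply mul_left_cancel₀ (mul_ne_zero hm hμ'mean.ne')
  rw [hZ]
  field_simp
end
end
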